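/- For every integer n ≥ 3, let GHZ = |0⟩^{⊗n} + |1⟩^{⊗n} ∈ (ℂ²)^{⊗n} and let W = Σ_{i=1}^{n} |0⟩^{⊗(i−1)} ⊗ |1⟩ ⊗ |0⟩^{⊗(n−i)} ∈ (ℂ²)^{⊗n}. Then the two-dimensional subspace spanned by GHZ and W is a genuinely entangled subspace: every nonzero linear combination a·GHZ + b·W is genuinely multiparty entangled. -/

import Mathlib

noncomputable section

/-- `ψ ∈ ℂ^{d₁} ⊗ ⋯ ⊗ ℂ^{dₙ}` is biproduct across the bipartition `S|S̄` of the parties. -/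
def IsBiproduct {n : ℕ} {d : Fin n → ℕ} (S : Finset (Fin n))
    (ψ : EuclideanSpace ℂ (∀ i, Fin (d i))) : Prop :=
  ∃ (φ : (∀ i : {i // i ∈ S}, Fin (d i.1)) → ℂ)
    (χ : (∀ i : {i // i ∉ S}, Fin (d i.1)) → ℂ),
    ∀ f : ∀ i, Fin (d i), ψ f = φ (fun i => f i.1) * χ (fun i => f i.1)

/-- A genuinely multiparty entangled (GME) vector: nonzero and not biproduct across
any bipartition `S|S̄` with `S` nonempty and proper. -/
def IsGME {n : ℕ} {d : Fin n → ℕ} (ψ : EuclideanSpace ℂ (∀ i, Fin (d i))) : Prop :=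
  ψ ≠ 0 ∧ ∀ S : Finset (Fin n), S.Nonempty → S ≠ Finset.univ → ¬ IsBiproduct S ψ

/-- A genuinely entangled subspace (GES): all its nonzero vectors are GME. -/
def IsGES {n : ℕ} {d : Fin n → ℕ}
    (V : Submodule ℂ (EuclideanSpace ℂ (∀ i, Fin (d i)))) : Prop :=
  ∀ ψ ∈ V, ψ ≠ 0 → IsGME ψ

/-- The (unnormalized) `n`-qubit GHZ state `|0⟩^{⊗n} + |1⟩^{⊗n}`. -/
def ghz (n : ℕ) : EuclideanSpace ℂ (Fin n → Fin 2) :=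
  WithLp.toLp 2 ((fun f => (if f = fun _ => 0 then 1 else 0) + (if f = fun _ => 1 then 1 else 0)) :
    (Fin n → Fin 2) → ℂ)

/-- The (unnormalized) `n`-qubit W state `Σᵢ |0⟩^{⊗(i−1)} ⊗ |1⟩ ⊗ |0⟩^{⊗(n−i)}`. -/
def wState (n : ℕ) : EuclideanSpace ℂ (Fin n → Fin 2) :=
  WithLp.toLp 2 ((fun f => ∑ i : Fin n, if f = (fun j => if j = i then 1 else 0) then 1 else 0) :
    (Fin n → Fin 2) → ℂ)

/-! If `ψ` is biproduct across `S|S̄`, then exchanging the `S`-parts of two configurations `f, g`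
preserves the product `ψ f * ψ g`. Take `ψ = a • GHZ + b • W`, `i ∈ S` and `j ∉ S`. Exchanging
the `S`-parts of `e_i` and `e_j` yields `e_i + e_j`, which for `n ≥ 3` is neither constant nor of
weight one, so `ψ` vanishes there, and `0`; hence `b² = 0`. Exchanging the `S`-parts of `1…1`
and `0…0` then yields two non-constant configurations, where `ψ = a • GHZ` vanishes; hence
`a² = 0`. -/

theorem IsBiproduct.apply_piecewise_mul_apply_piecewise {n : ℕ} {d : Fin n → ℕ}
    {S : Finset (Fin n)} {ψ : EuclideanSpace ℂ (∀ i, Fin (d i))} (h : IsBiproduct S ψ)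
    (f g : ∀ i, Fin (d i)) :
    ψ (S.piecewise f g) * ψ (S.piecewise g f) = ψ f * ψ g := by
  obtain ⟨φ, χ, hψ⟩ := h
  have hS (u v : ∀ i, Fin (d i)) :
      (fun i : {i // i ∈ S} => S.piecewise u v i) = fun i : {i // i ∈ S} => u i :=
    funext fun i => S.piecewise_eq_of_mem u v i.2
  have hSc (u v : ∀ i, Fin (d i)) :
      (fun i : {i // i ∉ S} => S.piecewise u v i) = fun i : {i // i ∉ S} => v i :=
    funext fun i => S.piecewise_eq_of_notMem u v i.2
  simp only [hψ, hS, hSc]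
  ring

section Qubits

variable {n : ℕ}

theorem ghz_apply_zero (hn : n ≠ 0) : ghz n 0 = 1 := by
  have : (0 : Fin n → Fin 2) ≠ 1 := fun h => by simpa using congrFun h ⟨0, by omega⟩
  simp [ghz, ← Pi.zero_def, ← Pi.one_def, this]

theorem ghz_apply_one (hn : n ≠ 0) : ghz n 1 = 1 := by
  have : (1 : Fin n → Fin 2) ≠ 0 := fun h => by simpa using congrFun h ⟨0, by omega⟩
  simp [ghz, ← Pi.zero_def, ← Pi.one_def, this]

theorem ghz_apply_eq_zero {f : Fin n → Fin 2} {i j : Fin n} (hi : f i = 0) (hj : f j = 1) :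
    ghz n f = 0 := by
  have h0 : f ≠ fun _ => 0 := fun h => by simp [h] at hj
  have h1 : f ≠ fun _ => 1 := fun h => by simp [h] at hi
  simp [ghz, h0, h1]

theorem ghz_apply_single (hn : 2 ≤ n) (i : Fin n) : ghz n (Pi.single i 1) = 0 := by
  obtain ⟨j, hj⟩ := Fintype.exists_ne_of_one_lt_card (by rw [Fintype.card_fin]; omega) i
  exact ghz_apply_eq_zero (i := j) (j := i) (by simp [hj]) (by simp)

theorem wState_apply (f : Fin n → Fin 2) :
    wState n f = ∑ i, if f = Pi.single i 1 then 1 else 0 := by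
  simp only [wState, ← Pi.single_apply]

theorem wState_apply_eq_zero_of_forall_ne_single {f : Fin n → Fin 2}
    (hf : ∀ i, f ≠ Pi.single i 1) : wState n f = 0 := by
  rw [wState_apply]
  exact Finset.sum_eq_zero fun i _ => if_neg (hf i)

theorem wState_apply_zero : wState n 0 = 0 :=
  wState_apply_eq_zero_of_forall_ne_single fun (i : Fin n) h => by simpa using congrFun h i

theorem wState_apply_eq_zero_of_ne {f : Fin n → Fin 2} {i j : Fin n} (hij : i ≠ j)
    (hi : f i = 1) (hj : f j = 1) : wState n f = 0 := by
  refine wState_apply_eq_zero_of_forall_ne_single fun k hk => hij ?_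
  subst hk
  simp only [Pi.single_apply] at hi hj
  split_ifs at hi hj <;> simp_all

theorem wState_apply_one (hn : 2 ≤ n) : wState n 1 = 0 :=
  wState_apply_eq_zero_of_ne (i := ⟨0, by omega⟩) (j := ⟨1, by omega⟩) (by simp) rfl rfl

theorem wState_apply_single (i : Fin n) : wState n (Pi.single i 1) = 1 := by
  rw [wState_apply, Finset.sum_eq_single i]
  · simp
  · intro k _ hk
    refine if_neg fun h => hk ?_
    simpa [Pi.single_apply, eq_comm] using congrFun h i
  · simp

variable (a b : ℂ)

theorem smul_ghz_add_smul_wState_apply (f : Fin n → Fin 2) :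
    (a • ghz n + b • wState n) f = a * ghz n f + b * wState n f :=
  rfl

theorem smul_ghz_add_smul_wState_apply_zero (hn : n ≠ 0) :
    (a • ghz n + b • wState n) 0 = a := by
  rw [smul_ghz_add_smul_wState_apply, ghz_apply_zero hn, wState_apply_zero]
  ring

theorem smul_ghz_add_smul_wState_apply_one (hn : 2 ≤ n) :
    (a • ghz n + b • wState n) 1 = a := by
  rw [smul_ghz_add_smul_wState_apply, ghz_apply_one (by omega), wState_apply_one hn]
  ring

theorem smul_ghz_add_smul_wState_apply_single (hn : 2 ≤ n) (i : Fin n) :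
    (a • ghz n + b • wState n) (Pi.single i 1) = b := by
  rw [smul_ghz_add_smul_wState_apply, ghz_apply_single hn, wState_apply_single]
  ring

theorem eq_zero_right_of_isBiproduct_smul_ghz_add_smul_wState (hn : 3 ≤ n)
    {S : Finset (Fin n)} (h : IsBiproduct S (a • ghz n + b • wState n)) {i j : Fin n}
    (hi : i ∈ S) (hj : j ∉ S) : b = 0 := by
  have key := h.apply_piecewise_mul_apply_piecewise (Pi.single i 1) (Pi.single j 1)
  set f := S.piecewise (Pi.single i 1) (Pi.single j 1 : Fin n → Fin 2)
  obtain ⟨l, hli, hlj⟩ := Fin.exists_ne_and_ne_of_two_lt i j (by omega)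
  have hfi : f i = 1 := by simp [f, hi]
  have hfj : f j = 1 := by simp [f, hj]
  have hfl : f l = 0 := by by_cases hl : l ∈ S <;> simp [f, hl, hli, hlj]
  have hswap : S.piecewise (Pi.single j 1) (Pi.single i 1) = (0 : Fin n → Fin 2) := by
    ext k
    by_cases hk : k ∈ S
    · simp [hk, ne_of_mem_of_not_mem hk hj]
    · simp [hk, (ne_of_mem_of_not_mem hi hk).symm]
  rw [smul_ghz_add_smul_wState_apply, ghz_apply_eq_zero hfl hfi,
    wState_apply_eq_zero_of_ne (ne_of_mem_of_not_mem hi hj) hfi hfj, hswap,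
    smul_ghz_add_smul_wState_apply_zero _ _ (by omega),
    smul_ghz_add_smul_wState_apply_single _ _ (by omega),
    smul_ghz_add_smul_wState_apply_single _ _ (by omega)] at key
  exact mul_self_eq_zero.1 (by linear_combination -key)

theorem eq_zero_of_isBiproduct_smul_ghz_add_smul_wState (hn : 3 ≤ n) {S : Finset (Fin n)}
    (h : IsBiproduct S (a • ghz n + b • wState n)) {i j : Fin n} (hi : i ∈ S) (hj : j ∉ S) :
    a = 0 ∧ b = 0 := by
  have hb := eq_zero_right_of_isBiproduct_smul_ghz_add_smul_wState a b hn h hi hj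
  refine ⟨?_, hb⟩
  have key := h.apply_piecewise_mul_apply_piecewise 1 0
  have hfj : S.piecewise (1 : Fin n → Fin 2) 0 j = 0 := by simp [hj]
  have hfi : S.piecewise (1 : Fin n → Fin 2) 0 i = 1 := by simp [hi]
  rw [smul_ghz_add_smul_wState_apply (f := S.piecewise 1 0), ghz_apply_eq_zero hfj hfi, hb,
    smul_ghz_add_smul_wState_apply_one _ _ (by omega),
    smul_ghz_add_smul_wState_apply_zero _ _ (by omega)] at key
  exact mul_self_eq_zero.1 (by linear_combination -key)

end Qubits

theorem isGME_smul_ghz_add_smul_wState {n : ℕ} (hn : 3 ≤ n) {a b : ℂ}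
    (hab : ¬(a = 0 ∧ b = 0)) : IsGME (a • ghz n + b • wState n) := by
  refine ⟨fun h => hab ⟨?_, ?_⟩, fun S ⟨i, hi⟩ hS hbi => hab ?_⟩
  · rw [← smul_ghz_add_smul_wState_apply_zero a b (by omega : n ≠ 0), h, PiLp.zero_apply]
  · rw [← smul_ghz_add_smul_wState_apply_single a b (by omega) (⟨0, by omega⟩ : Fin n), h,
      PiLp.zero_apply]
  · obtain ⟨j, hj⟩ : ∃ j, j ∉ S := by simpa [Finset.eq_univ_iff_forall] using hS
    exact eq_zero_of_isBiproduct_smul_ghz_add_smul_wState a b hn hbi hi hj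

/-- for every `n ≥ 3` the two-dimensional subspace spanned by the GHZ and W
states is a genuinely entangled subspace: every nonzero combination `a·GHZ + b·W` is GME. -/
theorem ghz_w_span_is_GES (n : ℕ) (hn : 3 ≤ n) :
    Module.finrank ℂ
      (Submodule.span ℂ ({ghz n, wState n} : Set (EuclideanSpace ℂ (Fin n → Fin 2)))) = 2 ∧
    IsGES (Submodule.span ℂ ({ghz n, wState n} : Set (EuclideanSpace ℂ (Fin n → Fin 2)))) ∧
    ∀ a b : ℂ, ¬(a = 0 ∧ b = 0) → IsGME (a • ghz n + b • wState n) := by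
  have hGME (a b : ℂ) (hab : ¬(a = 0 ∧ b = 0)) := isGME_smul_ghz_add_smul_wState hn hab
  refine ⟨?_, ?_, hGME⟩
  · have hli : LinearIndependent ℂ ![ghz n, wState n] :=
      LinearIndependent.pair_iff.2 fun s t h => by_contra fun hst => (hGME s t hst).1 h
    rw [← Matrix.range_cons_cons_empty, finrank_span_eq_card hli, Fintype.card_fin]
  · intro ψ hψ hne
    obtain ⟨a, b, rfl⟩ := Submodule.mem_span_pair.1 hψ
    exact hGME a b fun ⟨ha, hb⟩ => hne (by simp [ha, hb])
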